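/- Let 𝕄 be the 7-dimensional anticommutative algebra over ℂ with basis h, x, x', y, y', z, z' and multiplication table hx = 2x, hy = 2y, hz = 2z, hx' = −2x', hy' = −2y', hz' = −2z', xx' = yy' = zz' = h, xy = 2z', yz = 2x', zx = 2y', x'y' = −2z, y'z' = −2x, z'x' = −2y (all remaining products of basis elements zero, and products anticommutative). Then for arbitrary α, β, γ, δ, μ ∈ ℂ, the linear operator R : 𝕄 → 𝕄 defined on the basis by R(h) = (1/2)h + 2αx + 2βy' + 2γz, R(x) = 0, R(x') = x' − αh + δy' − 2βz, R(y) = y − βh − δx + μz, R(y') = 0, R(z) = 0, R(z') = z' − γh + 2βx − μy' is a Rota–Baxter operator of weight −1 on 𝕄. -/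

import Mathlib

/-!
The Rota–Baxter defect `(u, v) ↦ R u · R v - R (R u · v + u · R v + λ u v)` is bilinear, and it is
alternating as soon as the product is. Hence it vanishes identically once it vanishes on the
pairs `(eᵢ, eⱼ)` of basis vectors with `i < j`; for `𝕄` these are 21 finite computations in the
multiplication table.
-/

/-- `R` is a Rota–Baxter operator of weight `lam` for the bilinear product `mul`. -/
def IsRotaBaxter {F L : Type*} [Field F] [AddCommGroup L] [Module F L]
    (mul : L →ₗ[F] L →ₗ[F] L) (R : L → L) (lam : F) : Prop :=
  ∀ x y : L, mul (R x) (R y) = R (mul (R x) y + mul x (R y) + lam • mul x y)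

section RotaBaxterDefect

variable {F L : Type*} [Field F] [AddCommGroup L] [Module F L]
  (mul : L →ₗ[F] L →ₗ[F] L) (R : L →ₗ[F] L) (lam : F)

def rotaBaxterDefect : L →ₗ[F] L →ₗ[F] L :=
  (mul.comp R).compl₂ R - (LinearMap.llcomp F L L L R).comp (mul.comp R + mul.compl₂ R + lam • mul)

@[simp]
lemma rotaBaxterDefect_apply (u v : L) :
    rotaBaxterDefect mul R lam u v =
      mul (R u) (R v) - R (mul (R u) v + mul u (R v) + lam • mul u v) := by
  simp [rotaBaxterDefect]

lemma isRotaBaxter_iff_rotaBaxterDefect_eq_zero :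
    IsRotaBaxter mul R lam ↔ rotaBaxterDefect mul R lam = 0 := by
  simp only [IsRotaBaxter, LinearMap.ext_iff₂, rotaBaxterDefect_apply, LinearMap.zero_apply,
    sub_eq_zero]

variable {mul}

lemma isAlt_rotaBaxterDefect (hmul : mul.IsAlt) : (rotaBaxterDefect mul R lam).IsAlt := by
  intro u
  rw [rotaBaxterDefect_apply, hmul, hmul, ← hmul.neg, neg_add_cancel, zero_add, smul_zero,
    map_zero, sub_zero]

end RotaBaxterDefect

lemma LinearMap.IsAlt.eq_zero_of_apply_basis_of_lt {R M N ι : Type*} [CommRing R]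
    [AddCommGroup M] [Module R M] [AddCommGroup N] [Module R N] [LinearOrder ι]
    {B : M →ₗ[R] M →ₗ[R] N} (hB : B.IsAlt) (b : Module.Basis ι R M)
    (h : ∀ i j, i < j → B (b i) (b j) = 0) : B = 0 := by
  refine b.ext fun i => b.ext fun j => ?_
  rcases lt_trichotomy i j with hij | rfl | hji
  · exact h i j hij
  · exact hB _
  · rw [LinearMap.zero_apply, LinearMap.zero_apply, ← hB.neg, h j i hji, neg_zero]

lemma isRotaBaxter_of_basis_of_lt {F L ι : Type*} [Field F] [AddCommGroup L] [Module F L]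
    [LinearOrder ι] {mul : L →ₗ[F] L →ₗ[F] L} (hmul : mul.IsAlt) (R : L →ₗ[F] L) (lam : F)
    (b : Module.Basis ι F L)
    (h : ∀ i j, i < j → mul (R (b i)) (R (b j)) =
      R (mul (R (b i)) (b j) + mul (b i) (R (b j)) + lam • mul (b i) (b j))) :
    IsRotaBaxter mul R lam := by
  rw [isRotaBaxter_iff_rotaBaxterDefect_eq_zero]
  refine (isAlt_rotaBaxterDefect R lam hmul).eq_zero_of_apply_basis_of_lt b fun i j hij => ?_
  rw [rotaBaxterDefect_apply, h i j hij, sub_self]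

theorem stmt16 {V : Type*} [AddCommGroup V] [Module ℂ V]
    (mul : V →ₗ[ℂ] V →ₗ[ℂ] V)
    -- `𝕄` is anticommutative
    (hanti : ∀ v : V, mul v v = 0)
    -- basis `h, x, x', y, y', z, z'` of the 7-dimensional simple non-Lie Malcev algebra
    (e : Module.Basis (Fin 7) ℂ V) (h x x' y y' z z' : V)
    (he0 : e 0 = h) (he1 : e 1 = x) (he2 : e 2 = x') (he3 : e 3 = y)
    (he4 : e 4 = y') (he5 : e 5 = z) (he6 : e 6 = z')
    -- multiplication table
    (hhx : mul h x = (2 : ℂ) • x) (hhy : mul h y = (2 : ℂ) • y) (hhz : mul h z = (2 : ℂ) • z)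
    (hhx' : mul h x' = (-2 : ℂ) • x') (hhy' : mul h y' = (-2 : ℂ) • y')
    (hhz' : mul h z' = (-2 : ℂ) • z')
    (hxx' : mul x x' = h) (hyy' : mul y y' = h) (hzz' : mul z z' = h)
    (hxy : mul x y = (2 : ℂ) • z') (hyz : mul y z = (2 : ℂ) • x') (hzx : mul z x = (2 : ℂ) • y')
    (hx'y' : mul x' y' = (-2 : ℂ) • z) (hy'z' : mul y' z' = (-2 : ℂ) • x)
    (hz'x' : mul z' x' = (-2 : ℂ) • y)
    -- all remaining products of basis elements are zero
    (hxy' : mul x y' = 0) (hxz' : mul x z' = 0) (hx'y : mul x' y = 0)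
    (hx'z : mul x' z = 0) (hyz' : mul y z' = 0) (hy'z : mul y' z = 0)
    -- arbitrary scalars
    (α β γ δ μ : ℂ)
    -- the operator `R`
    (R : V →ₗ[ℂ] V)
    (hRh : R h = (2⁻¹ : ℂ) • h + (2 * α) • x + (2 * β) • y' + (2 * γ) • z)
    (hRx : R x = 0)
    (hRx' : R x' = x' - α • h + δ • y' - (2 * β) • z)
    (hRy : R y = y - β • h - δ • x + μ • z)
    (hRy' : R y' = 0) (hRz : R z = 0)
    (hRz' : R z' = z' - γ • h + (2 * β) • x - μ • y') :
    IsRotaBaxter mul (fun v => R v) (-1 : ℂ) := by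
  have hswap : ∀ u v, mul v u = -mul u v := fun u v => (LinearMap.IsAlt.neg hanti u v).symm
  refine isRotaBaxter_of_basis_of_lt hanti R (-1) e fun i j hij => ?_
  fin_cases i <;> fin_cases j <;> (try simp at hij) <;>
    simp only [Fin.zero_eta, Fin.mk_one, Fin.reduceFinMk, he0, he1, he2, he3, he4, he5, he6, hRh, hRx, hRx', hRy, hRy', hRz, hRz',
      map_add, map_sub, map_smul, map_neg, map_zero, LinearMap.add_apply, LinearMap.sub_apply,
      LinearMap.smul_apply, LinearMap.zero_apply, hanti, hhx, hhy, hhz, hhx', hhy', hhz',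
      hxx', hyy', hzz', hxy, hyz, hzx, hx'y', hy'z', hz'x', hxy', hxz', hx'y, hx'z, hyz', hy'z,
      hswap h x, hswap h y, hswap h z, hswap h x', hswap h y', hswap x x', hswap y y',
      hswap x y, hswap y z, hswap z x, hswap x' y', hswap z' x', hswap x y', hswap x' z,
      hswap y' z] <;>
    module
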